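/- arXiv:2604.15570 — 2 statements merged into one kernel-verified Lean document; each statement's English description precedes it below -/
import Mathlib

section
/- Suppose K_p ≥ 0, K_n ≥ 0, τ₁, τ₂ ≥ 0, θ ∈ ℝ, and ω ∈ ℝ are such that λ = iω is a root of the characteristic equation λ + (K_p − K_n) − K_p e^{−λ τ₁} e^{i θ} + K_n e^{−λ τ₂} e^{−i θ} = 0. Then ω² ≤ 4 K_p K_n; in particular every crossing frequency satisfies |ω| ≤ 2√(K_p K_n). -/
theorem key_ineq_aux (Kp Kn a b ω : ℝ) (hKp : 0 ≤ Kp) (hKn : 0 ≤ Kn)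
    (hc : Kp * (1 - Real.cos a) = Kn * (1 - Real.cos b))
    (hw : ω = Kp * Real.sin a + Kn * Real.sin b) :
    ω ^ 2 ≤ 4 * Kp * Kn := by
  have ha2 : a = 2 * (a/2) := by ring
  have hb2 : b = 2 * (b/2) := by ring
  rw [ha2] at hc hw; rw [hb2] at hc hw
  rw [Real.sin_two_mul, Real.sin_two_mul] at hw
  rw [Real.cos_two_mul, Real.cos_two_mul] at hc
  set sx := Real.sin (a/2); set cx := Real.cos (a/2)
  set sy := Real.sin (b/2); set cy := Real.cos (b/2)
  have p1 : sx^2 + cx^2 = 1 := Real.sin_sq_add_cos_sq _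
  have p2 : sy^2 + cy^2 = 1 := Real.sin_sq_add_cos_sq _
  have ht : Kp * sx^2 = Kn * sy^2 := by linear_combination hc/2 + Kp*p1 - Kn*p2
  have f1 : Kp*sx^2 + Kn*cy^2 = Kn := by linear_combination ht + Kn*p2
  have f2 : Kp*cx^2 + Kn*sy^2 = Kp := by linear_combination -ht + Kp*p1
  have key : (Kp*sx*cx + Kn*sy*cy)^2 + Kp*Kn*(sx*sy - cx*cy)^2
      = (Kp*sx^2 + Kn*cy^2) * (Kp*cx^2 + Kn*sy^2) := by ring
  rw [f1, f2] at key
  have hnn : 0 ≤ Kp*Kn*(sx*sy - cx*cy)^2 :=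
    mul_nonneg (mul_nonneg hKp hKn) (sq_nonneg _)
  have hsq : ω^2 = 4*(Kp*sx*cx + Kn*sy*cy)^2 := by rw [hw]; ring
  linarith [key, hnn, hsq]

/-- If `K_p ≥ 0`, `K_n ≥ 0`, `τ₁, τ₂ ≥ 0`, and `λ = iω` is a root of the
characteristic equation, then `ω² ≤ 4 K_p K_n`; in particular every crossing frequency
satisfies `|ω| ≤ 2 √(K_p K_n)`. -/
theorem stmt_9 (Kp Kn τ1 τ2 θ ω : ℝ) (hKp : 0 ≤ Kp) (hKn : 0 ≤ Kn)
    (hτ1 : 0 ≤ τ1) (hτ2 : 0 ≤ τ2)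
    (hroot : Complex.I * ω + ((Kp : ℂ) - Kn)
        - (Kp : ℂ) * Complex.exp (-(Complex.I * ω) * τ1) * Complex.exp (Complex.I * θ)
        + (Kn : ℂ) * Complex.exp (-(Complex.I * ω) * τ2) * Complex.exp (-Complex.I * θ) = 0) :
    ω ^ 2 ≤ 4 * Kp * Kn ∧ |ω| ≤ 2 * Real.sqrt (Kp * Kn) := by
  have e1 : -(Complex.I * ω) * τ1 = ((-(ω*τ1) : ℝ) : ℂ) * Complex.I := by push_cast; ring
  have e2 : -(Complex.I * ω) * τ2 = ((-(ω*τ2) : ℝ) : ℂ) * Complex.I := by push_cast; ring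
  have e3 : Complex.I * (θ:ℂ) = ((θ:ℝ):ℂ) * Complex.I := by ring
  have e4 : -Complex.I * (θ:ℂ) = ((-θ:ℝ):ℂ) * Complex.I := by push_cast; ring
  rw [e1, e2, e3, e4, Complex.exp_mul_I, Complex.exp_mul_I, Complex.exp_mul_I, Complex.exp_mul_I,
    ← Complex.ofReal_cos, ← Complex.ofReal_sin, ← Complex.ofReal_cos, ← Complex.ofReal_sin,
    ← Complex.ofReal_cos, ← Complex.ofReal_sin, ← Complex.ofReal_cos, ← Complex.ofReal_sin] at hroot
  have hre := congrArg Complex.re hroot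
  have him := congrArg Complex.im hroot
  simp only [Complex.add_re, Complex.add_im, Complex.sub_re, Complex.sub_im, Complex.mul_re,
    Complex.mul_im, Complex.I_re, Complex.I_im, Complex.ofReal_re, Complex.ofReal_im,
    Complex.zero_re, Complex.zero_im] at hre him
  simp only [Real.cos_neg, Real.sin_neg] at hre him
  ring_nf at hre him
  have hc : Kp * (1 - Real.cos (θ - ω*τ1)) = Kn * (1 - Real.cos (θ + ω*τ2)) := by
    rw [Real.cos_sub, Real.cos_add]; linarith [hre]
  have hw : ω = Kp * Real.sin (θ - ω*τ1) + Kn * Real.sin (θ + ω*τ2) := by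
    rw [Real.sin_sub, Real.sin_add]; linarith [him]
  have h1 : ω ^ 2 ≤ 4 * Kp * Kn := key_ineq_aux Kp Kn _ _ ω hKp hKn hc hw
  refine ⟨h1, ?_⟩
  have h2 : ω ^ 2 ≤ (2 * Real.sqrt (Kp * Kn)) ^ 2 := by
    have : (2 * Real.sqrt (Kp * Kn)) ^ 2 = 4 * (Kp * Kn) := by
      rw [mul_pow, Real.sq_sqrt (mul_nonneg hKp hKn)]; ring
    rw [this]; linarith
  calc |ω| = Real.sqrt (ω ^ 2) := (Real.sqrt_sq_eq_abs ω).symm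
    _ ≤ Real.sqrt ((2 * Real.sqrt (Kp * Kn)) ^ 2) := Real.sqrt_le_sqrt h2
    _ = 2 * Real.sqrt (Kp * Kn) := Real.sqrt_sq (by positivity)
end

section
/- Suppose K_n = 0, K_p > 0, and θ ∈ ℝ with e^{iθ} ≠ 1 (corresponding to a transverse mode k ≠ 0 of the ring). Then for every pair of delays τ₁, τ₂ ≥ 0, the characteristic equation λ + K_p − K_p e^{−λ τ₁} e^{i θ} = 0 has no purely imaginary root λ = iω with ω ∈ ℝ. In particular, in the purely cooperative ring no transverse mode can undergo a stability switch through the imaginary axis. -/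
/-!
The factor `e^{-iωτ₁} e^{iθ}` has modulus one, so an imaginary root `iω` would satisfy
`|iω + K_p| = K_p`, forcing `ω = 0`; the equation then reads `K_p = K_p e^{iθ}`.
-/

open Complex

theorem norm_I_mul_ofReal_add_ofReal_eq_abs_iff (ω K : ℝ) : ‖I * ω + K‖ = |K| ↔ ω = 0 := by
  rw [← sq_eq_sq₀ (norm_nonneg _) (abs_nonneg _), Complex.sq_norm, sq_abs,
    show I * ω + K = K + ω * I by ring, normSq_add_mul_I]
  simp

theorem stmt_15_general (Kp τ1 θ : ℝ) (hKp : 0 < Kp)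
    (hθ : Complex.exp (Complex.I * θ) ≠ 1) :
    ¬ ∃ ω : ℝ,
      Complex.I * ω + (Kp : ℂ)
        - (Kp : ℂ) * Complex.exp (-(Complex.I * ω) * τ1) * Complex.exp (Complex.I * θ) = 0 := by
  rintro ⟨ω, h⟩
  have hroot : I * ω + Kp = Kp * (exp (-(I * ω) * τ1) * exp (I * θ)) := by linear_combination h
  have hdelay : ‖exp (-(I * ω) * τ1)‖ = 1 := by rw [norm_exp]; simp
  have hω : ω = 0 := by
    rw [← norm_I_mul_ofReal_add_ofReal_eq_abs_iff ω Kp, hroot, norm_mul, norm_mul, norm_real,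
      Real.norm_eq_abs, hdelay, norm_exp_I_mul_ofReal, mul_one, mul_one]
  subst hω
  apply hθ
  simpa [hKp.ne'] using hroot

/-- If `K_n = 0`, `K_p > 0`, and `e^{iθ} ≠ 1` (a transverse mode), then for
every pair of delays `τ₁, τ₂ ≥ 0` the characteristic equation
`λ + K_p - K_p e^{-λτ₁} e^{iθ} = 0` has no purely imaginary root `λ = iω`, `ω ∈ ℝ`. -/
theorem stmt_15 (Kp τ1 τ2 θ : ℝ) (hKp : 0 < Kp) (hτ1 : 0 ≤ τ1) (hτ2 : 0 ≤ τ2)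
    (hθ : Complex.exp (Complex.I * θ) ≠ 1) :
    ¬ ∃ ω : ℝ,
      Complex.I * ω + (Kp : ℂ)
        - (Kp : ℂ) * Complex.exp (-(Complex.I * ω) * τ1) * Complex.exp (Complex.I * θ) = 0 :=
  stmt_15_general Kp τ1 θ hKp hθ
end
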